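/- The 6×6 complex matrix Q (given below, with parameter ρ ∈ ℂ, ρ ≠ ±1) has characteristic polynomial ((λ² + 2ρλ + 1))³, hence exactly two eigenvalues λ_{1,2} = −ρ ± √(ρ²−1), each with algebraic multiplicity 3, and λ₁λ₂ = 1. -/

import Mathlib

/-!
Write `Q = [[A, B], [-1, 0]]` in 3 × 3 blocks. Clearing the identity block shows that the
characteristic polynomial of such a block companion matrix is `det (λ² - λ A + B)`. Here `A` and `B`
are lower triangular with diagonals `-2ρ` and `1`, so this determinant is `(λ² + 2ρλ + 1)³`; the
roots `-ρ ± s` of the quadratic factor multiply to `ρ² - s² = 1` and are distinct since `s² ≠ 0`.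
-/

open Polynomial Complex

/-- The first-order evolution matrix `Q` of the asymptotic difference system. -/
noncomputable def Qmat (ρ : ℂ) : Matrix (Fin 6) (Fin 6) ℂ :=
  !![-2*ρ, 0, 0, 1, 0, 0;
     -2*Complex.I*ρ, -2*ρ, 0, 2*Complex.I, 1, 0;
     9+ρ, 2*Complex.I*ρ, -2*ρ, -2, 2*Complex.I, 1;
     -1, 0, 0, 0, 0, 0;
     0, -1, 0, 0, 0, 0;
     0, 0, -1, 0, 0, 0]

namespace Matrix

variable {n R : Type*} [Fintype n] [DecidableEq n] [CommRing R]

theorem det_fromBlocks_one₂₁ (A B D : Matrix n n R) :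
    (fromBlocks A B 1 D).det = (A * D - B).det := by
  have hfactor : fromBlocks A B 1 D =
      fromBlocks 1 (A - 1) 0 1 * fromBlocks 1 (B - (A - 1) * D) 1 D := by
    simp only [fromBlocks_multiply]
    congr 1 <;> noncomm_ring
  rw [hfactor, det_mul, det_fromBlocks_zero₂₁, det_fromBlocks_one₁₁]
  simp only [det_one, one_mul]
  congr 1
  noncomm_ring

theorem charpoly_fromBlocks_neg_one_zero (A B : Matrix n n R) :
    (fromBlocks A B (-1) 0).charpoly = (A.charmatrix * scalar n (X : R[X]) + B.map C).det := by
  rw [charpoly, charmatrix_fromBlocks, Matrix.map_neg _ (map_neg C), neg_neg,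
    Matrix.map_one _ C_0 C_1, charmatrix_zero, det_fromBlocks_one₂₁, sub_neg_eq_add]

theorem IsLowerTriangular.charpoly_fromBlocks_neg_one_zero [LinearOrder n]
    {A B : Matrix n n R} (hA : A.IsLowerTriangular) (hB : B.IsLowerTriangular) :
    (fromBlocks A B (-1) 0).charpoly = ∏ i, (X ^ 2 - C (A i i) * X + C (B i i)) := by
  rw [Matrix.charpoly_fromBlocks_neg_one_zero, det_of_isLowerTriangular]
  · refine Finset.prod_congr rfl fun i _ => ?_
    simp only [add_apply, mul_diagonal, scalar_apply, charmatrix_apply_eq, map_apply]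
    ring
  · exact (hA.charmatrix.mul (blockTriangular_diagonal _)).add (hB.map C)

end Matrix

noncomputable def Qmat₁₁ (ρ : ℂ) : Matrix (Fin 3) (Fin 3) ℂ :=
  !![-2*ρ, 0, 0;
     -2*Complex.I*ρ, -2*ρ, 0;
     9+ρ, 2*Complex.I*ρ, -2*ρ]

noncomputable def Qmat₁₂ : Matrix (Fin 3) (Fin 3) ℂ :=
  !![1, 0, 0;
     2*Complex.I, 1, 0;
     -2, 2*Complex.I, 1]

theorem reindex_Qmat (ρ : ℂ) :
    (Qmat ρ).reindex (finSumFinEquiv (n := 3)).symm (finSumFinEquiv (n := 3)).symm =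
      Matrix.fromBlocks (Qmat₁₁ ρ) Qmat₁₂ (-1) 0 := by
  ext (i | i) (j | j) <;> fin_cases i <;> fin_cases j <;>
    first | rfl | exact (neg_zero (G := ℂ)).symm

theorem Qmat₁₁_isLowerTriangular (ρ : ℂ) : (Qmat₁₁ ρ).IsLowerTriangular := by
  intro i j hij
  fin_cases i <;> fin_cases j <;> first | rfl | exact absurd hij (by decide)

theorem Qmat₁₂_isLowerTriangular : Qmat₁₂.IsLowerTriangular := by
  intro i j hij
  fin_cases i <;> fin_cases j <;> first | rfl | exact absurd hij (by decide)

theorem Qmat₁₁_apply_self (ρ : ℂ) (i : Fin 3) : Qmat₁₁ ρ i i = -(2 * ρ) := by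
  fin_cases i <;> simp [Qmat₁₁]

theorem Qmat₁₂_apply_self (i : Fin 3) : Qmat₁₂ i i = 1 := by
  fin_cases i <;> rfl

theorem charpoly_Qmat_eq_pow (ρ : ℂ) :
    (Qmat ρ).charpoly = (X ^ 2 + C (2 * ρ) * X + 1) ^ 3 := by
  rw [← Matrix.charpoly_reindex (finSumFinEquiv (n := 3)).symm, reindex_Qmat,
    (Qmat₁₁_isLowerTriangular ρ).charpoly_fromBlocks_neg_one_zero Qmat₁₂_isLowerTriangular]
  simp only [Qmat₁₁_apply_self, Qmat₁₂_apply_self, map_neg, map_one, neg_mul, sub_neg_eq_add,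
    Finset.prod_const, Finset.card_univ, Fintype.card_fin]

theorem charpoly_Qmat (ρ s : ℂ) (hρ1 : ρ ≠ 1) (hρ2 : ρ ≠ -1) (hs : s ^ 2 = ρ ^ 2 - 1) :
    (Qmat ρ).charpoly = ((X - C (-ρ + s)) * (X - C (-ρ - s))) ^ 3 ∧
    (Qmat ρ).charpoly = (X ^ 2 + C (2 * ρ) * X + 1) ^ 3 ∧
    (-ρ + s) * (-ρ - s) = 1 ∧ (-ρ + s) ≠ (-ρ - s) := by
  have hprod : (-ρ + s) * (-ρ - s) = 1 := by linear_combination -hs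
  have hfactor : (X - C (-ρ + s)) * (X - C (-ρ - s)) = X ^ 2 + C (2 * ρ) * X + 1 :=
    calc (X - C (-ρ + s)) * (X - C (-ρ - s))
        = X ^ 2 + C (2 * ρ) * X + C ((-ρ + s) * (-ρ - s)) := by
          simp only [map_mul, map_add, map_neg, map_sub, map_ofNat]; ring
      _ = X ^ 2 + C (2 * ρ) * X + 1 := by rw [hprod, C_1]
  have hs0 : s ≠ 0 := by
    rintro rfl
    exact (sq_eq_one_iff.mp (by linear_combination -hs)).elim hρ1 hρ2
  refine ⟨by rw [hfactor, charpoly_Qmat_eq_pow], charpoly_Qmat_eq_pow ρ, hprod, fun h => hs0 ?_⟩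
  linear_combination h / 2
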